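/- Let d and δ be disjoint differentials on a finite-dimensional vector space C (i.e. d² = δ² = 0, ker(δ) ∩ im(d) = 0, ker(d) ∩ im(δ) = 0) and □ = dδ + δd. Then the homology ker(δ)/im(δ) is isomorphic to ker(□), and likewise the cohomology ker(d)/im(d) is isomorphic to ker(□). -/

import Mathlib

/-!
On `ker d ⊓ ker δ` both `dδ` and `δd` vanish; conversely, if `dδx = -δdx` then this vector lies in
`ker d ⊓ range δ`, hence is zero, and disjointness once more kills `dx` and `δx`. So
`ker □ = ker d ⊓ ker δ`. Rank–nullity turns the two disjointness conditions into
`rank d = rank δ`, so `range δ` and `ker d` are complementary in `C`. As `range δ ≤ ker δ`,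
the modular law splits `ker δ = range δ ⊕ (ker δ ⊓ ker d)`, and the homology `ker δ / range δ`
is the complement `ker δ ⊓ ker d = ker □`. Swapping `d` and `δ` gives the cohomology.
-/

open LinearMap Submodule Module

namespace Submodule

variable {R M : Type*} [Ring R] [AddCommGroup M] [Module R M]

noncomputable def quotientComapSubtypeEquivInfOfIsCompl {A B W : Submodule R M} (hAB : A ≤ B)
    (hAW : IsCompl A W) : (B ⧸ A.comap B.subtype) ≃ₗ[R] (B ⊓ W : Submodule R M) :=
  (quotientEquivOfIsCompl _ _ (isCompl_comap_subtype_of_isCompl_of_le hAW hAB)).trans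
    ((W.comap B.subtype).equivMapOfInjective B.subtype B.injective_subtype |>.trans
      (LinearEquiv.ofEq _ _ (map_comap_subtype B W)))

end Submodule

namespace LinearMap

section Ring

variable {R M : Type*} [Ring R] [AddCommGroup M] [Module R M] {d δ : M →ₗ[R] M}

theorem ker_comp_add_comp_eq_inf (hd : d ∘ₗ d = 0)
    (disj1 : ker δ ⊓ range d = ⊥) (disj2 : ker d ⊓ range δ = ⊥) :
    ker (d ∘ₗ δ + δ ∘ₗ d) = ker d ⊓ ker δ := by
  have zero_of_disj1 := disjoint_def.mp (disjoint_iff.mpr disj1)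
  have zero_of_disj2 := disjoint_def.mp (disjoint_iff.mpr disj2)
  ext x
  simp only [mem_ker, add_apply, comp_apply, mem_inf]
  refine ⟨fun hx ↦ ?_, fun ⟨hdx, hδx⟩ ↦ by rw [hdx, hδx, map_zero, map_zero, add_zero]⟩
  have hdδx : d (δ x) = 0 := by
    refine zero_of_disj2 _ (range_le_ker_iff.mpr hd ⟨δ x, rfl⟩) ⟨-d x, ?_⟩
    rw [map_neg, neg_eq_iff_add_eq_zero, add_comm, hx]
  have hδdx : δ (d x) = 0 := by rwa [hdδx, zero_add] at hx
  exact ⟨zero_of_disj1 _ hδdx ⟨x, rfl⟩, zero_of_disj2 _ hdδx ⟨x, rfl⟩⟩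

end Ring

section Field

variable {K V : Type*} [Field K] [AddCommGroup V] [Module K V] [FiniteDimensional K V]
  {d δ : V →ₗ[K] V}

theorem isCompl_range_ker_of_inf_eq_bot
    (disj1 : ker δ ⊓ range d = ⊥) (disj2 : ker d ⊓ range δ = ⊥) :
    IsCompl (range δ) (ker d) := by
  have rank_nullity_d := finrank_range_add_finrank_ker d
  have rank_nullity_δ := finrank_range_add_finrank_ker δ
  have := finrank_add_finrank_le_of_disjoint (disjoint_iff.mpr disj1)
  exact (isCompl_iff_disjoint _ _ (by omega)).mpr (disjoint_iff.mpr disj2).symm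

end Field

end LinearMap

/-- for disjoint differentials `d`, `δ` on a finite-dimensional vector space
with `□ = dδ + δd`, the homology `ker(δ)/im(δ)` and the cohomology `ker(d)/im(d)` are both
isomorphic to `ker(□)`. -/
theorem homology_iso_harmonics
    (K : Type*) [Field K]
    (C : Type*) [AddCommGroup C] [Module K C] [FiniteDimensional K C]
    (d δ : C →ₗ[K] C)
    (hd : d ∘ₗ d = 0) (hδ : δ ∘ₗ δ = 0)
    (disj1 : LinearMap.ker δ ⊓ LinearMap.range d = ⊥)
    (disj2 : LinearMap.ker d ⊓ LinearMap.range δ = ⊥) :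
    Nonempty ((LinearMap.ker δ ⧸
        Submodule.comap (LinearMap.ker δ).subtype (LinearMap.range δ)) ≃ₗ[K]
      LinearMap.ker (d ∘ₗ δ + δ ∘ₗ d)) ∧
    Nonempty ((LinearMap.ker d ⧸
        Submodule.comap (LinearMap.ker d).subtype (LinearMap.range d)) ≃ₗ[K]
      LinearMap.ker (d ∘ₗ δ + δ ∘ₗ d)) := by
  have homology := quotientComapSubtypeEquivInfOfIsCompl (range_le_ker_iff.mpr hδ)
    (isCompl_range_ker_of_inf_eq_bot disj1 disj2)
  have cohomology := quotientComapSubtypeEquivInfOfIsCompl (range_le_ker_iff.mpr hd)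
    (isCompl_range_ker_of_inf_eq_bot disj2 disj1)
  have harmonics := ker_comp_add_comp_eq_inf hd disj1 disj2
  refine ⟨⟨homology.trans (LinearEquiv.ofEq _ _ ?_)⟩, ⟨cohomology.trans (LinearEquiv.ofEq _ _ ?_)⟩⟩
  · rw [harmonics, inf_comm]
  · rw [harmonics]
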